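/- arXiv:1811.01036 — 3 statements merged into one kernel-verified Lean document; each statement's English description precedes it below -/
import Mathlib

section
/- Let π be a standard polynomial product weight on T^d with exponents 0 ≤ s_j < 1, and let μ be a nonnegative Borel measure on T̄^d with finite energy E_π[μ] < ∞. Let μ_b be the boundary projection of μ. Then there exist constants c, C > 0 depending only on d and s_1, …, s_d such that c · V_π^{μ_b}(α) ≤ V_π^μ(α) ≤ C · V_π^{μ_b}(α) for every α ∈ T̄^d. -/
open MeasureTheory ENNReal Set
open scoped Classical

noncomputable section

/-- Vertices of the dyadic tree `T`: finite binary strings, rooted at the empty string. -/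
abbrev TreeV : Type := List Bool

/-- The boundary `∂T`: infinite binary sequences. -/
abbrev TreeB : Type := ℕ → Bool

/-- The closure `T̄ = T ∪ ∂T`. -/
abbrev TreeBar : Type := TreeV ⊕ TreeB

/-- Every subset of the (countable) vertex set is Borel. -/
instance : MeasurableSpace TreeV := ⊤

/-- `ancOf α β` means `α ≤ β` in `T̄`: `β` is an ancestor (initial segment) of `α`, or `α = β`. -/
def ancOf : TreeBar → TreeBar → Prop
  | Sum.inl a, Sum.inl b => b <+: a
  | Sum.inr ω, Sum.inl b => ∀ i : Fin b.length, b.get i = ω i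
  | Sum.inl _, Sum.inr _ => False
  | Sum.inr ω, Sum.inr ω' => ω = ω'

/-- `d_T(a)`: the number of ancestors of the vertex `a` in `T`, including itself. -/
def dT (a : TreeV) : ℕ := a.length + 1

/-- Vertices of the `d`-tree `T^d`. -/
abbrev VtxD (d : ℕ) : Type := Fin d → TreeV

/-- `T̄^d`. -/
abbrev BarD (d : ℕ) : Type := Fin d → TreeBar

/-- The distinguished boundary `(∂T)^d`. -/
abbrev BndD (d : ℕ) : Type := Fin d → TreeB

/-- Embedding of `T^d` into `T̄^d`. -/
def vEmb {d : ℕ} (α : VtxD d) : BarD d := fun i => Sum.inl (α i)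

/-- Embedding of `(∂T)^d` into `T̄^d`. -/
def bEmb {d : ℕ} (ω : BndD d) : BarD d := fun i => Sum.inr (ω i)

/-- `γ ≤ β`, for `γ ∈ T̄^d` and a vertex `β ∈ T^d` (componentwise order). -/
def vleOf {d : ℕ} (γ : BarD d) (β : VtxD d) : Prop := ∀ i, ancOf (γ i) (Sum.inl (β i))

/-- The successor set `S(β) ⊆ T̄^d` of a vertex `β ∈ T^d`. -/
def succSet {d : ℕ} (β : VtxD d) : Set (BarD d) := {γ | vleOf γ β}

/-- The boundary successor set `∂S(β)`, viewed as a subset of `(∂T)^d`. -/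
def bSucc {d : ℕ} (β : VtxD d) : Set (BndD d) := {ω | vleOf (bEmb ω) β}

/-- One–variable successor set `S(b) ⊆ T̄`. -/
def succ1 (b : TreeV) : Set TreeBar := {γ | ancOf γ (Sum.inl b)}

/-- One–variable boundary successor set `∂S(b) ⊆ ∂T`. -/
def bSucc1 (b : TreeV) : Set TreeB := {ω | ancOf (Sum.inr ω) (Sum.inl b)}

/-- The Hardy operator `(If)(α) = ∑_{β ∈ T^d, β ≥ α} f(β) π(β)` on `T^d`. -/
def hardy {d : ℕ} (π f : VtxD d → ℝ≥0∞) (α : BarD d) : ℝ≥0∞ :=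
  ∑' β : VtxD d, Set.indicator {β : VtxD d | vleOf α β} (fun β => f β * π β) β

/-- The capacity `cap_π E` of a set `E ⊆ T̄^d`. -/
def capac {d : ℕ} (π : VtxD d → ℝ≥0∞) (E : Set (BarD d)) : ℝ≥0∞ :=
  ⨅ (f : VtxD d → ℝ≥0∞) (_ : ∀ α ∈ E, 1 ≤ hardy π f α), ∑' β : VtxD d, f β ^ 2 * π β

/-- The potential `V_π^μ(α) = ∑_{β ∈ T^d, β ≥ α} μ(S(β)) π(β)` of a measure on `T̄^d`. -/
def potential {d : ℕ} (π : VtxD d → ℝ≥0∞) (μ : Measure (BarD d)) (α : BarD d) : ℝ≥0∞ :=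
  ∑' β : VtxD d, Set.indicator {β : VtxD d | vleOf α β} (fun β => μ (succSet β) * π β) β

/-- The energy `E_π[μ] = ∑_{β ∈ T^d} μ(S(β))² π(β)` of a measure on `T̄^d`. -/
def energy {d : ℕ} (π : VtxD d → ℝ≥0∞) (μ : Measure (BarD d)) : ℝ≥0∞ :=
  ∑' β : VtxD d, μ (succSet β) ^ 2 * π β

/-- The potential of a measure on the distinguished boundary `(∂T)^d`. -/
def potentialB {d : ℕ} (π : VtxD d → ℝ≥0∞) (μ : Measure (BndD d)) (α : BarD d) : ℝ≥0∞ :=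
  ∑' β : VtxD d, Set.indicator {β : VtxD d | vleOf α β} (fun β => μ (bSucc β) * π β) β

/-- The energy of a measure on the distinguished boundary `(∂T)^d`. -/
def energyB {d : ℕ} (π : VtxD d → ℝ≥0∞) (μ : Measure (BndD d)) : ℝ≥0∞ :=
  ∑' β : VtxD d, μ (bSucc β) ^ 2 * π β

/-- One–variable Hardy operator. -/
def hardy1 (π f : TreeV → ℝ≥0∞) (α : TreeBar) : ℝ≥0∞ :=
  ∑' b : TreeV, Set.indicator {b : TreeV | ancOf α (Sum.inl b)} (fun b => f b * π b) b

/-- One–variable capacity of `E ⊆ T̄`. -/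
def capac1 (π : TreeV → ℝ≥0∞) (E : Set TreeBar) : ℝ≥0∞ :=
  ⨅ (f : TreeV → ℝ≥0∞) (_ : ∀ α ∈ E, 1 ≤ hardy1 π f α), ∑' b : TreeV, f b ^ 2 * π b

/-- One–variable potential. -/
def potential1 (π : TreeV → ℝ≥0∞) (μ : Measure TreeBar) (α : TreeBar) : ℝ≥0∞ :=
  ∑' b : TreeV, Set.indicator {b : TreeV | ancOf α (Sum.inl b)} (fun b => μ (succ1 b) * π b) b

/-- One–variable energy. -/
def energy1 (π : TreeV → ℝ≥0∞) (μ : Measure TreeBar) : ℝ≥0∞ :=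
  ∑' b : TreeV, μ (succ1 b) ^ 2 * π b

/-- `d_π(α∧β) = ∑_{γ ∈ T^d, γ ≥ α, γ ≥ β} π(γ)`: the weighted count of common ancestors,
i.e. of the predecessors of the least common ancestor `α∧β`. -/
def dwedge {d : ℕ} (π : VtxD d → ℝ≥0∞) (α β : BarD d) : ℝ≥0∞ :=
  ∑' γ : VtxD d, Set.indicator {γ : VtxD d | vleOf α γ ∧ vleOf β γ} π γ

/-- One–variable `d_π(α∧β)`. -/
def dwedge1 (π : TreeV → ℝ≥0∞) (α β : TreeBar) : ℝ≥0∞ :=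
  ∑' c : TreeV, Set.indicator {c : TreeV | ancOf α (Sum.inl c) ∧ ancOf β (Sum.inl c)} π c

/-- The standard polynomial product weight `π(β) = ∏_j 2^{s_j d_T(β_j)}`. -/
def stdW (d : ℕ) (s : Fin d → ℝ) : VtxD d → ℝ≥0∞ :=
  fun β => ∏ j, (2 : ℝ≥0∞) ^ (s j * (dT (β j) : ℝ))

/-- The one–variable standard polynomial weight `π₁(γ) = 2^{s₁ d_T(γ)}`. -/
def stdW1 (s₁ : ℝ) : TreeV → ℝ≥0∞ := fun γ => (2 : ℝ≥0∞) ^ (s₁ * (dT γ : ℝ))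

/-- `M` is the Borel measure on `∂T` determined by `M(∂S(a)) = 2^{-d_T(a)+1}` for all `a ∈ T`. -/
def IsStdM (M : Measure TreeB) : Prop :=
  ∀ a : TreeV, M (bSucc1 a) = (2⁻¹ : ℝ≥0∞) ^ a.length

/-- `rho g τ` is the fraction of a unit mass placed at `τ ∈ T̄` that lands in `∂S(g)` when the
mass of every vertex is spread uniformly (w.r.t. `M`) over its boundary successor set, while
mass already on the boundary is kept in place. -/
def rho (g : TreeV) : TreeBar → ℝ≥0∞
  | Sum.inl b =>
      if g <+: b then 1 else if b <+: g then (2⁻¹ : ℝ≥0∞) ^ (g.length - b.length) else 0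
  | Sum.inr ω => if ancOf (Sum.inr ω) (Sum.inl g) then 1 else 0

/-- `IsBdryProj μ μb`: `μb` is the boundary projection of `μ`, characterised by its values on
the cylinders `∂S(γ)`, `γ ∈ T^d`. -/
def IsBdryProj {d : ℕ} (μ : Measure (BarD d)) (μb : Measure (BndD d)) : Prop :=
  ∀ γ : VtxD d, μb (bSucc γ) = ∫⁻ τ, ∏ j, rho (γ j) (τ j) ∂μ

/-- The set of points of `T̄^d` all of whose coordinates lie on the boundary `∂T`,
i.e. the distinguished boundary viewed inside `T̄^d`. -/
def bdryD (d : ℕ) : Set (BarD d) := {γ | ∀ i, ∃ ω : TreeB, γ i = Sum.inr ω}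

/-- The boundary projection `S_b(E) = ⋃_{β ∈ E} ∂S(β) ⊆ (∂T)^d` of `E ⊆ T̄^d`,
viewed inside `T̄^d`. -/
def sbProj {d : ℕ} (E : Set (BarD d)) : Set (BarD d) :=
  {γ | γ ∈ bdryD d ∧ ∃ β ∈ E, ∀ i, ancOf (γ i) (β i)}

/-- The maximal function `M_μ g (ω) = sup_{α ∈ T^d, α ≥ ω} (1/μ(∂S(α))) ∫_{∂S(α)} g dμ`. -/
def maxFn {d : ℕ} (μ : Measure (BndD d)) (g : BndD d → ℝ≥0∞) (ω : BndD d) : ℝ≥0∞ :=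
  ⨆ (α : VtxD d) (_ : ω ∈ bSucc α), (μ (bSucc α))⁻¹ * ∫⁻ x in bSucc α, g x ∂μ

/-- Embedding of `T̄` into `ℕ → Option Bool`, recording the binary digits. -/
def treeBarEmbed : TreeBar → (ℕ → Option Bool)
  | Sum.inl a => fun n => a[n]?
  | Sum.inr ω => fun n => some (ω n)

instance : TopologicalSpace (Option Bool) := ⊥

/-- The natural compact topology on `T̄`, induced by the metric `δ`; equivalently, the topology
induced from the product topology on `ℕ → Option Bool`. -/
instance : TopologicalSpace TreeBar := TopologicalSpace.induced treeBarEmbed inferInstance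

/-! ### Auxiliary material for Statement 8 -/

section Statement8Aux

open Function

lemma indic_mem {α : Type*} (S : Set α) {b : α} (h : b ∈ S) (f : α → ℝ≥0∞) :
    S.indicator f b = f b := Set.indicator_of_mem h f

lemma indic_not_mem {α : Type*} (S : Set α) {b : α} (h : b ∉ S) (f : α → ℝ≥0∞) :
    S.indicator f b = 0 := Set.indicator_of_notMem h f

/-- The weight in terms of the list length. -/
lemma stdW1_eq (s₁ : ℝ) (b : TreeV) :
    stdW1 s₁ b = (2 : ℝ≥0∞) ^ (s₁ * ((b.length : ℝ) + 1)) := by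
  rw [stdW1, dT]
  congr 2
  push_cast
  ring

/-- Two ancestors of the same point with the same length coincide. -/
lemma anc_unique {a : TreeBar} {b b' : TreeV} (hb : ancOf a (Sum.inl b))
    (hb' : ancOf a (Sum.inl b')) (hl : b.length = b'.length) : b = b' := by
  cases a with
  | inl a₀ =>
    rw [List.prefix_iff_eq_take.mp hb, List.prefix_iff_eq_take.mp hb', hl]
  | inr ω =>
    apply List.ext_get hl
    intro i h1 h2
    rw [hb ⟨i, h1⟩, hb' ⟨i, h2⟩]

/-- A prefix of an ancestor is an ancestor. -/
lemma anc_trans {a : TreeBar} {b c : TreeV} (h : ancOf a (Sum.inl b)) (hcb : c <+: b) :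
    ancOf a (Sum.inl c) := by
  cases a with
  | inl a₀ => exact hcb.trans h
  | inr ω =>
    intro i
    have h1 : (i : ℕ) < b.length := lt_of_lt_of_le i.2 hcb.length_le
    have h2 := h ⟨i, h1⟩
    simp only [List.get_eq_getElem] at h2 ⊢
    rw [← h2, hcb.getElem i.2]

lemma rho_eq_one {g : TreeV} {t : TreeBar} (h : ancOf t (Sum.inl g)) : rho g t = 1 := by
  cases t with
  | inl b => exact if_pos h
  | inr ω => exact if_pos h

lemma measurableSet_bSucc1 (b : TreeV) : MeasurableSet (bSucc1 b) := by
  have : bSucc1 b = ⋂ i : Fin b.length, (fun ω : TreeB => ω i) ⁻¹' {b.get i} := by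
    ext ω
    simp only [bSucc1, ancOf, Set.mem_setOf_eq, Set.mem_iInter, Set.mem_preimage,
      Set.mem_singleton_iff]
    exact ⟨fun h i => (h i).symm, fun h i => (h i).symm⟩
  rw [this]
  exact MeasurableSet.iInter fun i =>
    (measurable_pi_apply (i : ℕ)) (measurableSet_singleton _)

lemma measurable_rho (g : TreeV) : Measurable (rho g) := by
  apply measurable_fun_sum
  · exact measurable_from_top
  · have : (rho g ∘ Sum.inr : TreeB → ℝ≥0∞)
        = fun ω => if ω ∈ bSucc1 g then 1 else 0 := by
      funext ω
      simp only [Function.comp_apply, rho, bSucc1, Set.mem_setOf_eq]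
    rw [this]
    exact Measurable.ite (measurableSet_bSucc1 g) measurable_const measurable_const

lemma measurableSet_succ1 (b : TreeV) : MeasurableSet (succ1 b) := by
  rw [show succ1 b = Sum.inl '' {a : TreeV | b <+: a} ∪ Sum.inr '' bSucc1 b from ?_]
  · exact (MeasurableSet.inl_image MeasurableSpace.measurableSet_top).union
      ((measurableSet_bSucc1 b).inr_image)
  · ext γ
    cases γ with
    | inl a =>
      simp only [succ1, Set.mem_setOf_eq, Set.mem_union, Set.mem_image]
      constructor
      · intro h; exact Or.inl ⟨a, h, rfl⟩
      · rintro (⟨x, hx, hxe⟩ | ⟨x, hx, hxe⟩)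
        · cases hxe; exact hx
        · cases hxe
    | inr ω =>
      simp only [succ1, Set.mem_setOf_eq, Set.mem_union, Set.mem_image]
      constructor
      · intro h; exact Or.inr ⟨ω, h, rfl⟩
      · rintro (⟨x, hx, hxe⟩ | ⟨x, hx, hxe⟩)
        · cases hxe
        · cases hxe; exact hx

lemma measurableSet_succSet {d : ℕ} (β : VtxD d) : MeasurableSet (succSet β) := by
  have : succSet β = ⋂ i, (fun γ : BarD d => γ i) ⁻¹' succ1 (β i) := by
    ext γ
    simp only [succSet, vleOf, Set.mem_setOf_eq, Set.mem_iInter, Set.mem_preimage, succ1]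
  rw [this]
  exact MeasurableSet.iInter fun i => (measurable_pi_apply i) (measurableSet_succ1 _)

/-- A `tsum` over a finite product of copies of `TreeV` of a product factorises. -/
lemma tsum_pi_prod : ∀ {d : ℕ} (g : Fin d → TreeV → ℝ≥0∞),
    (∑' β : VtxD d, ∏ j, g j (β j)) = ∏ j, ∑' b : TreeV, g j b := by
  intro d
  induction d with
  | zero =>
    intro g
    rw [tsum_eq_single (fun i : Fin 0 => ([] : TreeV))]
    · simp
    · intro b hb
      exact absurd (funext fun i => i.elim0) hb
  | succ n ih =>
    intro g
    rw [← (Fin.consEquiv (fun _ : Fin (n + 1) => TreeV)).tsum_eq, ENNReal.tsum_prod']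
    have h1 : ∀ (x : TreeV) (f : VtxD n),
        (∏ j, g j ((Fin.consEquiv (fun _ : Fin (n + 1) => TreeV)) (x, f) j))
          = g 0 x * ∏ j : Fin n, g j.succ (f j) := by
      intro x f
      rw [Fin.prod_univ_succ]
      simp [Fin.consEquiv]
    calc (∑' (x : TreeV) (f : VtxD n),
            ∏ j, g j ((Fin.consEquiv (fun _ : Fin (n + 1) => TreeV)) (x, f) j))
        = ∑' (x : TreeV), g 0 x * ∑' (f : VtxD n), ∏ j : Fin n, g j.succ (f j) := by
          refine tsum_congr fun x => ?_
          rw [← ENNReal.tsum_mul_left]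
          exact tsum_congr fun f => h1 x f
      _ = (∑' x : TreeV, g 0 x) * ∑' (f : VtxD n), ∏ j : Fin n, g j.succ (f j) :=
          ENNReal.tsum_mul_right
      _ = ∏ j, ∑' b : TreeV, g j b := by
          rw [ih fun j => g j.succ, Fin.prod_univ_succ]

/-- The geometric constant. -/
def Kq (s₁ : ℝ) : ℝ≥0∞ := (1 - (2 : ℝ≥0∞) ^ (s₁ - 1))⁻¹

/-- The one-dimensional comparison constant. -/
def Ks (s₁ : ℝ) : ℝ≥0∞ := 1 + Kq s₁

lemma q_lt_one {s₁ : ℝ} (h : s₁ < 1) : (2 : ℝ≥0∞) ^ (s₁ - 1) < 1 :=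
  ENNReal.rpow_lt_one_of_one_lt_of_neg (by norm_num) (by linarith)

lemma Ks_ne_top {s₁ : ℝ} (h : s₁ < 1) : Ks s₁ ≠ ⊤ := by
  have h1 : (1 : ℝ≥0∞) - 2 ^ (s₁ - 1) ≠ 0 := by
    rw [ne_eq, tsub_eq_zero_iff_le]
    exact not_le.mpr (q_lt_one h)
  rw [Ks, Kq]
  exact ENNReal.add_ne_top.mpr ⟨ENNReal.one_ne_top, ENNReal.inv_ne_top.mpr h1⟩

lemma Ks_ne_zero (s₁ : ℝ) : Ks s₁ ≠ 0 := by
  rw [Ks]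
  simp

/-- Summing the geometric tail. -/
lemma sum_geom_tail {s₁ : ℝ} (n : ℕ) (c : ℝ≥0∞) :
    (∑' k : ℕ, if n < k then c * ((2 : ℝ≥0∞) ^ (s₁ - 1)) ^ (k - n) else 0)
      ≤ Kq s₁ * c := by
  set q := (2 : ℝ≥0∞) ^ (s₁ - 1) with hq
  set G := fun k : ℕ => if n < k then c * q ^ (k - n) else 0 with hG
  have hsupp : Function.support G ⊆ Set.range fun m : ℕ => n + 1 + m := by
    intro k hk
    rcases lt_or_ge n k with h | h
    · exact ⟨k - (n + 1), show n + 1 + (k - (n + 1)) = k by omega⟩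
    · exact absurd (if_neg (not_lt.mpr h)) hk
  have hinj : Function.Injective fun m : ℕ => n + 1 + m := add_right_injective (n + 1)
  calc (∑' k, G k) = ∑' x : Set.range fun m : ℕ => n + 1 + m, G x :=
        (tsum_subtype_eq_of_support_subset hsupp).symm
    _ = ∑' m : ℕ, G (n + 1 + m) := tsum_range G hinj
    _ = ∑' m : ℕ, c * q ^ (m + 1) := by
        refine tsum_congr fun m => ?_
        have h1 : n < n + 1 + m := by omega
        have h2 : n + 1 + m - n = m + 1 := by omega
        show (if n < n + 1 + m then c * q ^ (n + 1 + m - n) else 0) = c * q ^ (m + 1)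
        rw [if_pos h1, h2]
    _ = c * (q * (1 - q)⁻¹) := by
        rw [ENNReal.tsum_mul_left, ENNReal.tsum_geometric_add_one]
    _ ≤ c * (1 * (1 - q)⁻¹) := by
        rcases le_or_gt q 1 with h | h
        · exact mul_le_mul_right (mul_le_mul_left h _) _
        · have h0 : (1 - q)⁻¹ = ⊤ := by
            rw [tsub_eq_zero_of_le h.le, ENNReal.inv_zero]
          rw [h0, one_mul]
          exact mul_le_mul_right le_top _
    _ = Kq s₁ * c := by rw [one_mul, Kq, mul_comm]

/-- The basic weight computation. -/
lemma weight_calc (s₁ : ℝ) (n k : ℕ) (h : n < k) :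
    (2 : ℝ≥0∞) ^ (s₁ * ((k : ℝ) + 1)) * (2⁻¹ : ℝ≥0∞) ^ (k - n)
      = (2 : ℝ≥0∞) ^ (s₁ * ((n : ℝ) + 1)) * ((2 : ℝ≥0∞) ^ (s₁ - 1)) ^ (k - n) := by
  set m := k - n with hm
  have hk : (k : ℝ) + 1 = ((n : ℝ) + 1) + m := by
    have : k = n + m := by omega
    rw [this]
    push_cast
    ring
  rw [hk, mul_add, ENNReal.rpow_add _ _ two_ne_zero ENNReal.ofNat_ne_top, mul_assoc]
  congr 1
  have h1 : (2 : ℝ≥0∞) ^ (s₁ * (m : ℝ)) = ((2 : ℝ≥0∞) ^ s₁) ^ m := by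
    rw [ENNReal.rpow_mul, ENNReal.rpow_natCast]
  have h2 : (2 : ℝ≥0∞) ^ (s₁ - 1) = (2 : ℝ≥0∞) ^ s₁ * 2⁻¹ := by
    rw [sub_eq_add_neg, ENNReal.rpow_add _ _ two_ne_zero ENNReal.ofNat_ne_top,
      ENNReal.rpow_neg_one]
  rw [h1, h2, mul_pow, ← mul_pow]

/-- The one-dimensional kernel estimate. -/
lemma onedim {s₁ : ℝ} (hs : s₁ < 1) (a t : TreeBar) :
    (∑' b : TreeV, Set.indicator {b : TreeV | ancOf a (Sum.inl b)}
        (fun b => stdW1 s₁ b * rho b t) b)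
      ≤ Ks s₁ * dwedge1 (stdW1 s₁) a t := by
  classical
  set w := stdW1 s₁ with hw
  have hsplit : ∀ b : TreeV,
      Set.indicator {b : TreeV | ancOf a (Sum.inl b)} (fun b => w b * rho b t) b
        ≤ Set.indicator {c : TreeV | ancOf a (Sum.inl c) ∧ ancOf t (Sum.inl c)} w b
          + Set.indicator {b : TreeV | ancOf a (Sum.inl b) ∧ ¬ ancOf t (Sum.inl b)}
              (fun b => w b * rho b t) b := by
    intro b
    by_cases h1 : ancOf a (Sum.inl b)
    · by_cases h2 : ancOf t (Sum.inl b)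
      · rw [indic_mem {b : TreeV | ancOf a (Sum.inl b)} h1,
          indic_mem {c : TreeV | ancOf a (Sum.inl c) ∧ ancOf t (Sum.inl c)} ⟨h1, h2⟩,
          indic_not_mem {b : TreeV | ancOf a (Sum.inl b) ∧ ¬ ancOf t (Sum.inl b)}
            (fun hc => hc.2 h2),
          rho_eq_one h2, mul_one, add_zero]
      · rw [indic_mem {b : TreeV | ancOf a (Sum.inl b)} h1,
          indic_not_mem {c : TreeV | ancOf a (Sum.inl c) ∧ ancOf t (Sum.inl c)}
            (fun hc => h2 hc.2),
          indic_mem {b : TreeV | ancOf a (Sum.inl b) ∧ ¬ ancOf t (Sum.inl b)} ⟨h1, h2⟩,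
          zero_add]
    · rw [indic_not_mem {b : TreeV | ancOf a (Sum.inl b)} h1]
      exact zero_le
  refine le_trans (ENNReal.tsum_le_tsum hsplit) ?_
  rw [ENNReal.tsum_add]
  have hdw : (∑' b : TreeV,
      Set.indicator {c : TreeV | ancOf a (Sum.inl c) ∧ ancOf t (Sum.inl c)} w b)
        = dwedge1 w a t := rfl
  rw [hdw, Ks, add_mul, one_mul]
  refine add_le_add_right ?_ _
  -- remaining: the "mass above" part is bounded by `Kq s₁ * dwedge1 w a t`
  set F := fun b : TreeV =>
      Set.indicator {b : TreeV | ancOf a (Sum.inl b) ∧ ¬ ancOf t (Sum.inl b)}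
        (fun b => w b * rho b t) b with hFdef
  show (∑' b, F b) ≤ Kq s₁ * dwedge1 w a t
  cases t with
  | inr ω =>
    have hz : ∀ b, F b = 0 := by
      intro b
      simp only [hFdef]
      by_cases hm : b ∈ {b : TreeV | ancOf a (Sum.inl b) ∧ ¬ ancOf (Sum.inr ω) (Sum.inl b)}
      · rw [indic_mem _ hm]
        have : rho b (Sum.inr ω) = 0 := if_neg hm.2
        rw [this, mul_zero]
      · exact indic_not_mem _ hm _
    rw [tsum_congr hz]
    simp
  | inl t₀ =>
    set n := t₀.length with hn
    by_cases hat : ancOf a (Sum.inl t₀)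
    swap
    · have hz : ∀ b, F b = 0 := by
        intro b
        show Set.indicator {b : TreeV | ancOf a (Sum.inl b) ∧ ¬ ancOf (Sum.inl t₀) (Sum.inl b)}
          (fun b => w b * rho b (Sum.inl t₀)) b = 0
        by_cases hm : b ∈ {b : TreeV | ancOf a (Sum.inl b) ∧ ¬ ancOf (Sum.inl t₀) (Sum.inl b)}
        · rw [indic_mem _ hm]
          have hbt : ¬ (b <+: t₀) := hm.2
          have hrho : rho b (Sum.inl t₀) = 0 := by
            rw [show rho b (Sum.inl t₀)
                = if b <+: t₀ then 1
                  else if t₀ <+: b then (2⁻¹ : ℝ≥0∞) ^ (b.length - t₀.length) else 0 from rfl,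
              if_neg hbt, if_neg]
            intro htb
            exact hat (anc_trans hm.1 htb)
          rw [hrho, mul_zero]
        · exact indic_not_mem _ hm _
      rw [tsum_congr hz]
      simp
    · -- main case: `t₀` is an ancestor of `a`
      have hwt : w t₀ ≤ dwedge1 w a (Sum.inl t₀) := by
        have h0 : Set.indicator
            {c : TreeV | ancOf a (Sum.inl c) ∧ ancOf (Sum.inl t₀) (Sum.inl c)} w t₀ = w t₀ :=
          indic_mem {c : TreeV | ancOf a (Sum.inl c) ∧ ancOf (Sum.inl t₀) (Sum.inl c)}
            ⟨hat, List.prefix_refl t₀⟩ _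
        calc w t₀ = _ := h0.symm
          _ ≤ dwedge1 w a (Sum.inl t₀) := by rw [dwedge1]; exact ENNReal.le_tsum t₀
      have key : ∀ b : TreeV, F b ≠ 0 →
          ancOf a (Sum.inl b) ∧ t₀ <+: b ∧ n < b.length ∧
            F b = w b * (2⁻¹ : ℝ≥0∞) ^ (b.length - n) := by
        intro b hb
        by_cases hm : b ∈ {b : TreeV | ancOf a (Sum.inl b) ∧ ¬ ancOf (Sum.inl t₀) (Sum.inl b)}
        swap
        · exact absurd (indic_not_mem _ hm _) hb
        obtain ⟨hab, hnt⟩ := hm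
        have hbt : ¬ (b <+: t₀) := hnt
        have hFb : F b = w b * rho b (Sum.inl t₀) :=
          indic_mem {b : TreeV | ancOf a (Sum.inl b) ∧ ¬ ancOf (Sum.inl t₀) (Sum.inl b)}
            ⟨hab, hnt⟩ _
        have hrho : rho b (Sum.inl t₀)
            = if t₀ <+: b then (2⁻¹ : ℝ≥0∞) ^ (b.length - n) else 0 := by
          rw [show rho b (Sum.inl t₀)
              = if b <+: t₀ then 1
                else if t₀ <+: b then (2⁻¹ : ℝ≥0∞) ^ (b.length - t₀.length) else 0 from rfl,
            if_neg hbt, hn]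
        by_cases htb : t₀ <+: b
        · have hlen : n < b.length := by
            rcases lt_or_eq_of_le htb.length_le with h | h
            · exact h
            · exact absurd (htb.eq_of_length h ▸ List.prefix_refl b) hbt
          exact ⟨hab, htb, hlen, by rw [hFb, hrho, if_pos htb]⟩
        · exact absurd (by rw [hFb, hrho, if_neg htb, mul_zero]) hb
      -- fiber decomposition by length
      have hfib : (∑' b, F b)
          = ∑' k : ℕ, ∑' b : {b : TreeV // b.length = k}, F ↑b := by
        rw [← (Equiv.sigmaFiberEquiv (fun b : TreeV => b.length)).tsum_eq F,
          ENNReal.tsum_sigma']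
        rfl
      have hinner : ∀ k : ℕ, (∑' b : {b : TreeV // b.length = k}, F ↑b)
          ≤ (if n < k then w t₀ * ((2 : ℝ≥0∞) ^ (s₁ - 1)) ^ (k - n) else 0) := by
        intro k
        by_cases hex : ∃ b : {b : TreeV // b.length = k}, F ↑b ≠ 0
        · obtain ⟨b₀, hb₀⟩ := hex
          have huniq : ∀ b : {b : TreeV // b.length = k}, b ≠ b₀ → F ↑b = 0 := by
            intro b hne
            by_contra hFb
            obtain ⟨hab, _, _, _⟩ := key _ hFb
            obtain ⟨hab₀, _, _, _⟩ := key _ hb₀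
            exact hne (Subtype.ext (anc_unique hab hab₀ (b.2.trans b₀.2.symm)))
          rw [tsum_eq_single b₀ huniq]
          obtain ⟨_, _, hlen, hFeq⟩ := key _ hb₀
          have hk : n < k := b₀.2 ▸ hlen
          rw [if_pos hk, hFeq, hw, stdW1_eq, stdW1_eq, b₀.2, hn]
          exact le_of_eq (weight_calc s₁ t₀.length k hk)
        · push_neg at hex
          rw [tsum_congr hex]
          simp
      calc (∑' b, F b)
          = ∑' k : ℕ, ∑' b : {b : TreeV // b.length = k}, F ↑b := hfib
        _ ≤ ∑' k : ℕ, (if n < k then w t₀ * ((2 : ℝ≥0∞) ^ (s₁ - 1)) ^ (k - n) else 0) :=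
            ENNReal.tsum_le_tsum hinner
        _ ≤ Kq s₁ * w t₀ := sum_geom_tail n (w t₀)
        _ ≤ Kq s₁ * dwedge1 w a (Sum.inl t₀) := mul_le_mul_right hwt _

lemma stdW_eq_prod {d : ℕ} (s : Fin d → ℝ) (β : VtxD d) :
    stdW d s β = ∏ j, stdW1 (s j) (β j) := rfl

/-- The factorisation of `dwedge` into one-dimensional pieces. -/
lemma dwedge_eq_prod {d : ℕ} (s : Fin d → ℝ) (α τ : BarD d) :
    dwedge (stdW d s) α τ = ∏ j, dwedge1 (stdW1 (s j)) (α j) (τ j) := by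
  rw [dwedge]
  simp only [dwedge1]
  rw [← tsum_pi_prod fun j b =>
    Set.indicator {c : TreeV | ancOf (α j) (Sum.inl c) ∧ ancOf (τ j) (Sum.inl c)}
      (stdW1 (s j)) b]
  refine tsum_congr fun γ => ?_
  by_cases h : vleOf α γ ∧ vleOf τ γ
  · rw [indic_mem {γ : VtxD d | vleOf α γ ∧ vleOf τ γ} h, stdW_eq_prod]
    exact Finset.prod_congr rfl fun j _ =>
      (indic_mem {c : TreeV | ancOf (α j) (Sum.inl c) ∧ ancOf (τ j) (Sum.inl c)}
        ⟨h.1 j, h.2 j⟩ _).symm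
  · rw [indic_not_mem {γ : VtxD d | vleOf α γ ∧ vleOf τ γ} h]
    have hex : ∃ j, ¬ (ancOf (α j) (Sum.inl (γ j)) ∧ ancOf (τ j) (Sum.inl (γ j))) := by
      by_contra hc
      push_neg at hc
      exact h ⟨fun j => (hc j).1, fun j => (hc j).2⟩
    obtain ⟨j, hj⟩ := hex
    exact (Finset.prod_eq_zero (Finset.mem_univ j)
      (indic_not_mem {c : TreeV | ancOf (α j) (Sum.inl c) ∧ ancOf (τ j) (Sum.inl c)} hj _)).symm

/-- The multi-dimensional kernel estimate. -/
lemma kernel_le {d : ℕ} (s : Fin d → ℝ) (hs : ∀ j, s j < 1) (α τ : BarD d) :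
    (∑' β : VtxD d, Set.indicator {β : VtxD d | vleOf α β}
        (fun β => stdW d s β * ∏ j, rho (β j) (τ j)) β)
      ≤ (∏ j, Ks (s j)) * dwedge (stdW d s) α τ := by
  have hfac : ∀ β : VtxD d, Set.indicator {β : VtxD d | vleOf α β}
      (fun β => stdW d s β * ∏ j, rho (β j) (τ j)) β
      = ∏ j, Set.indicator {b : TreeV | ancOf (α j) (Sum.inl b)}
          (fun b => stdW1 (s j) b * rho b (τ j)) (β j) := by
    intro β
    by_cases h : vleOf α β
    · rw [indic_mem {β : VtxD d | vleOf α β} h, stdW_eq_prod, ← Finset.prod_mul_distrib]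
      exact Finset.prod_congr rfl fun j _ =>
        (indic_mem {b : TreeV | ancOf (α j) (Sum.inl b)} (h j)
          (fun b => stdW1 (s j) b * rho b (τ j))).symm
    · rw [indic_not_mem {β : VtxD d | vleOf α β} h]
      have hex : ∃ j, ¬ ancOf (α j) (Sum.inl (β j)) := by
        by_contra hc
        push_neg at hc
        exact h hc
      obtain ⟨j, hj⟩ := hex
      exact (Finset.prod_eq_zero (Finset.mem_univ j)
        (indic_not_mem {b : TreeV | ancOf (α j) (Sum.inl b)} hj _)).symm
  calc (∑' β : VtxD d, Set.indicator {β : VtxD d | vleOf α β}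
          (fun β => stdW d s β * ∏ j, rho (β j) (τ j)) β)
      = ∑' β : VtxD d, ∏ j, Set.indicator {b : TreeV | ancOf (α j) (Sum.inl b)}
          (fun b => stdW1 (s j) b * rho b (τ j)) (β j) := tsum_congr hfac
    _ = ∏ j, ∑' b : TreeV, Set.indicator {b : TreeV | ancOf (α j) (Sum.inl b)}
          (fun b => stdW1 (s j) b * rho b (τ j)) b := tsum_pi_prod _
    _ ≤ ∏ j, Ks (s j) * dwedge1 (stdW1 (s j)) (α j) (τ j) :=
        Finset.prod_le_prod' fun j _ => onedim (hs j) (α j) (τ j)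
    _ = (∏ j, Ks (s j)) * ∏ j, dwedge1 (stdW1 (s j)) (α j) (τ j) := Finset.prod_mul_distrib
    _ = (∏ j, Ks (s j)) * dwedge (stdW d s) α τ := by rw [dwedge_eq_prod]

/-- The potential as the integral of the wedge kernel. -/
lemma potential_eq_lintegral {d : ℕ} (π : VtxD d → ℝ≥0∞) (μ : Measure (BarD d)) (α : BarD d) :
    potential π μ α = ∫⁻ τ, dwedge π α τ ∂μ := by
  set h : VtxD d → BarD d → ℝ≥0∞ := fun β τ =>
    Set.indicator {γ : VtxD d | vleOf α γ} π β
      * Set.indicator (succSet β) (fun _ => (1 : ℝ≥0∞)) τ with hh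
  have hmeas : ∀ β, Measurable (h β) :=
    fun β => (measurable_const.indicator (measurableSet_succSet β)).const_mul _
  have hint : ∀ β : VtxD d, (∫⁻ τ, h β τ ∂μ)
      = Set.indicator {β : VtxD d | vleOf α β} (fun β => μ (succSet β) * π β) β := by
    intro β
    rw [hh]
    simp only []
    rw [lintegral_const_mul _ (measurable_const.indicator (measurableSet_succSet β)),
      lintegral_indicator_const (measurableSet_succSet β), one_mul]
    by_cases hβ : vleOf α β
    · rw [indic_mem {γ : VtxD d | vleOf α γ} hβ,
        indic_mem {β : VtxD d | vleOf α β} hβ, mul_comm]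
    · rw [indic_not_mem {γ : VtxD d | vleOf α γ} hβ,
        indic_not_mem {β : VtxD d | vleOf α β} hβ, zero_mul]
  have hker : ∀ τ : BarD d, (∑' β : VtxD d, h β τ) = dwedge π α τ := by
    intro τ
    refine tsum_congr fun β => ?_
    rw [hh]
    simp only []
    by_cases h1 : vleOf α β
    · by_cases h2 : vleOf τ β
      · rw [indic_mem {γ : VtxD d | vleOf α γ} h1, indic_mem (succSet β) h2,
          indic_mem {γ : VtxD d | vleOf α γ ∧ vleOf τ γ} ⟨h1, h2⟩, mul_one]
      · rw [indic_not_mem (succSet β) h2,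
          indic_not_mem {γ : VtxD d | vleOf α γ ∧ vleOf τ γ} (fun hc => h2 hc.2), mul_zero]
    · rw [indic_not_mem {γ : VtxD d | vleOf α γ} h1,
        indic_not_mem {γ : VtxD d | vleOf α γ ∧ vleOf τ γ} (fun hc => h1 hc.1), zero_mul]
  calc potential π μ α = ∑' β : VtxD d, ∫⁻ τ, h β τ ∂μ := (tsum_congr hint).symm
    _ = ∫⁻ τ, ∑' β : VtxD d, h β τ ∂μ :=
        (lintegral_tsum fun β => (hmeas β).aemeasurable).symm
    _ = ∫⁻ τ, dwedge π α τ ∂μ := lintegral_congr hker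

/-- The boundary potential as the integral of the `rho`-kernel. -/
lemma potentialB_eq_lintegral {d : ℕ} (π : VtxD d → ℝ≥0∞) (μ : Measure (BarD d))
    (μb : Measure (BndD d)) (hproj : IsBdryProj μ μb) (α : BarD d) :
    potentialB π μb α
      = ∫⁻ τ, (∑' β : VtxD d, Set.indicator {β : VtxD d | vleOf α β}
          (fun β => π β * ∏ j, rho (β j) (τ j)) β) ∂μ := by
  set h : VtxD d → BarD d → ℝ≥0∞ := fun β τ =>
    Set.indicator {γ : VtxD d | vleOf α γ} π β * ∏ j, rho (β j) (τ j) with hh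
  have hmeasρ : ∀ β : VtxD d, Measurable fun τ : BarD d => ∏ j, rho (β j) (τ j) :=
    fun β => Finset.measurable_prod _ fun j _ =>
      (measurable_rho (β j)).comp (measurable_pi_apply j)
  have hmeas : ∀ β, Measurable (h β) := fun β => (hmeasρ β).const_mul _
  have hint : ∀ β : VtxD d, (∫⁻ τ, h β τ ∂μ)
      = Set.indicator {β : VtxD d | vleOf α β} (fun β => μb (bSucc β) * π β) β := by
    intro β
    rw [hh]
    simp only []
    rw [lintegral_const_mul _ (hmeasρ β), ← hproj β]
    by_cases hβ : vleOf α β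
    · rw [indic_mem {γ : VtxD d | vleOf α γ} hβ,
        indic_mem {β : VtxD d | vleOf α β} hβ, mul_comm]
    · rw [indic_not_mem {γ : VtxD d | vleOf α γ} hβ,
        indic_not_mem {β : VtxD d | vleOf α β} hβ, zero_mul]
  have hker : ∀ τ : BarD d, (∑' β : VtxD d, h β τ)
      = ∑' β : VtxD d, Set.indicator {β : VtxD d | vleOf α β}
          (fun β => π β * ∏ j, rho (β j) (τ j)) β := by
    intro τ
    refine tsum_congr fun β => ?_
    rw [hh]
    simp only []
    by_cases h1 : vleOf α β
    · rw [indic_mem {γ : VtxD d | vleOf α γ} h1,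
        indic_mem {β : VtxD d | vleOf α β} h1]
    · rw [indic_not_mem {γ : VtxD d | vleOf α γ} h1,
        indic_not_mem {β : VtxD d | vleOf α β} h1, zero_mul]
  calc potentialB π μb α = ∑' β : VtxD d, ∫⁻ τ, h β τ ∂μ := (tsum_congr hint).symm
    _ = ∫⁻ τ, ∑' β : VtxD d, h β τ ∂μ :=
        (lintegral_tsum fun β => (hmeas β).aemeasurable).symm
    _ = _ := lintegral_congr hker

/-- Termwise comparison: `μ(S(β)) ≤ μ_b(∂S(β))`. -/
lemma mu_le_mub {d : ℕ} (μ : Measure (BarD d)) (μb : Measure (BndD d))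
    (hproj : IsBdryProj μ μb) (β : VtxD d) : μ (succSet β) ≤ μb (bSucc β) := by
  rw [hproj β]
  have h1 : μ (succSet β)
      = ∫⁻ τ, Set.indicator (succSet β) (fun _ => (1 : ℝ≥0∞)) τ ∂μ := by
    rw [lintegral_indicator_const (measurableSet_succSet β), one_mul]
  rw [h1]
  refine lintegral_mono fun τ => ?_
  by_cases h : τ ∈ succSet β
  · rw [indic_mem (succSet β) h]
    exact le_of_eq (Finset.prod_eq_one fun j _ => rho_eq_one (h j)).symm
  · rw [indic_not_mem (succSet β) h]
    exact zero_le

end Statement8Aux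

/-- Theorem 1: for a standard polynomial product weight, the potentials of a
finite-energy measure `μ` and of its boundary projection `μ_b` are comparable, with constants
depending only on `d` and `s_1, …, s_d`. -/
theorem statement8 (d : ℕ) (s : Fin d → ℝ) (hs0 : ∀ j, 0 ≤ s j) (hs1 : ∀ j, s j < 1) :
    ∃ c C : ℝ≥0∞, 0 < c ∧ C ≠ ⊤ ∧
      ∀ μ : Measure (BarD d), energy (stdW d s) μ ≠ ⊤ →
        ∀ μb : Measure (BndD d), IsBdryProj μ μb →
          ∀ α : BarD d,
            c * potentialB (stdW d s) μb α ≤ potential (stdW d s) μ α ∧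
            potential (stdW d s) μ α ≤ C * potentialB (stdW d s) μb α := by
  set K : ℝ≥0∞ := ∏ j, Ks (s j) with hK
  have hKtop : K ≠ ⊤ := by
    rw [hK]
    exact (ENNReal.prod_lt_top fun j _ => (Ks_ne_top (hs1 j)).lt_top).ne
  have hK0 : K ≠ 0 := by
    rw [hK, Finset.prod_ne_zero_iff]
    exact fun j _ => Ks_ne_zero (s j)
  refine ⟨K⁻¹, 1, ENNReal.inv_pos.mpr hKtop, ENNReal.one_ne_top, ?_⟩
  intro μ _ μb hproj α
  constructor
  · -- lower bound
    rw [potential_eq_lintegral, potentialB_eq_lintegral (stdW d s) μ μb hproj α]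
    calc K⁻¹ * ∫⁻ τ, (∑' β : VtxD d, Set.indicator {β : VtxD d | vleOf α β}
            (fun β => stdW d s β * ∏ j, rho (β j) (τ j)) β) ∂μ
        ≤ K⁻¹ * ∫⁻ τ, K * dwedge (stdW d s) α τ ∂μ :=
          mul_le_mul_right (lintegral_mono fun τ => kernel_le s hs1 α τ) _
      _ = K⁻¹ * (K * ∫⁻ τ, dwedge (stdW d s) α τ ∂μ) := by
          rw [lintegral_const_mul' _ _ hKtop]
      _ = ∫⁻ τ, dwedge (stdW d s) α τ ∂μ := by
          rw [← mul_assoc, ENNReal.inv_mul_cancel hK0 hKtop, one_mul]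
  · -- upper bound
    rw [one_mul, potential, potentialB]
    refine ENNReal.tsum_le_tsum fun β => ?_
    exact Set.indicator_le_indicator
      (mul_le_mul_left (mu_le_mub μ μb hproj β) _)
end
end

section
/- Let π be a standard polynomial product weight on T^d with exponents 0 ≤ s_j < 1. Let φ : [0,2]^d → [0,∞) be increasing in each variable with A := ∫_{[0,2]^d} φ(t_1,…,t_d) / (t_1^{1+s_1} ⋯ t_d^{1+s_d}) dt_1 ⋯ dt_d < ∞. If μ is a nonnegative Borel measure on (∂T)^d such that μ(∂S(α)) ≤ φ(M(∂S(α_1)), …, M(∂S(α_d))) for every α ∈ T^d, then the potential of μ is uniformly bounded on the distinguished boundary: V_π^μ(ω) ≤ C · A for all ω ∈ (∂T)^d, where C depends only on d and s_1, …, s_d. -/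
open MeasureTheory ENNReal Set
open scoped Classical

noncomputable section

section S15aux

open Function

variable {d : ℕ}

/-- The ancestor of `ω` at depths `n`. -/
def seg (ω : BndD d) (n : Fin d → ℕ) : VtxD d :=
  fun i => List.ofFn fun j : Fin (n i) => ω i (j : ℕ)

lemma seg_len (ω : BndD d) (n : Fin d → ℕ) (i : Fin d) : (seg ω n i).length = n i := by
  simp [seg]

lemma seg_vle (ω : BndD d) (n : Fin d → ℕ) : vleOf (bEmb ω) (seg ω n) := by
  intro i
  show ∀ j : Fin (seg ω n i).length, (seg ω n i).get j = ω i (j : ℕ)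
  intro j
  rw [List.get_eq_getElem]
  simp [seg]

lemma vle_eq_seg (ω : BndD d) {β : VtxD d} (h : vleOf (bEmb ω) β) :
    β = seg ω fun i => (β i).length := by
  funext i
  have h' : ∀ j : Fin (β i).length, (β i).get j = ω i (j : ℕ) := h i
  apply List.ext_get (by simp [seg])
  intro m h1 h2
  have := h' ⟨m, h1⟩
  simp only [seg, List.get_ofFn, List.get_eq_getElem] at this ⊢
  simpa using this

lemma seg_inj (ω : BndD d) : Function.Injective (seg ω) := by
  intro n m h
  funext i
  have : (seg ω n i).length = (seg ω m i).length := by rw [h]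
  simpa [seg_len] using this

lemma potB_eq (π : VtxD d → ℝ≥0∞) (μ : Measure (BndD d)) (ω : BndD d) :
    potentialB π μ (bEmb ω) = ∑' n : Fin d → ℕ, μ (bSucc (seg ω n)) * π (seg ω n) := by
  unfold potentialB
  rw [← Function.Injective.tsum_eq (seg_inj ω)
    (f := fun β : VtxD d =>
      Set.indicator {β : VtxD d | vleOf (bEmb ω) β} (fun β => μ (bSucc β) * π β) β) ?_]
  · exact tsum_congr fun n => Set.indicator_of_mem (seg_vle ω n) _
  · intro β hβ
    have hm : β ∈ {β : VtxD d | vleOf (bEmb ω) β} := Set.mem_of_indicator_ne_zero hβ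
    exact ⟨_, (vle_eq_seg ω hm).symm⟩

lemma two_rpow_sum {ι : Type*} (s : Finset ι) (a : ι → ℝ) :
    (∏ i ∈ s, (2 : ℝ≥0∞) ^ a i) = (2 : ℝ≥0∞) ^ (∑ i ∈ s, a i) := by
  induction s using Finset.cons_induction with
  | empty => simp
  | cons i s hi ih =>
    rw [Finset.prod_cons, Finset.sum_cons, ih,
      ENNReal.rpow_add _ _ two_ne_zero ENNReal.ofNat_ne_top]

lemma ofReal_two_rpow (e : ℝ) : ENNReal.ofReal ((2 : ℝ) ^ e) = (2 : ℝ≥0∞) ^ e := by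
  rw [← ENNReal.ofReal_rpow_of_pos (by norm_num : (0:ℝ) < 2)]
  norm_num

lemma inv_pow_eq_rpow (k : ℕ) : ((2 : ℝ)⁻¹) ^ k = (2 : ℝ) ^ (-(k : ℝ)) := by
  rw [Real.rpow_neg (by norm_num), Real.rpow_natCast, inv_pow]

end S15aux

/-- under the single box condition of Proposition 2, the potential of `μ` is
uniformly bounded on the distinguished boundary by `C(d,s) · A`, where `A` is the integral
`∫_{[0,2]^d} φ(t)/∏_j t_j^{1+s_j} dt`. -/
theorem statement15 (d : ℕ) (s : Fin d → ℝ) (hs0 : ∀ j, 0 ≤ s j) (hs1 : ∀ j, s j < 1) :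
    ∃ C : ℝ≥0∞, C ≠ ⊤ ∧
      ∀ φ : (Fin d → ℝ) → ℝ≥0∞,
        (∀ t t' : Fin d → ℝ, (∀ j, t j ∈ Set.Icc (0 : ℝ) 2) →
          (∀ j, t' j ∈ Set.Icc (0 : ℝ) 2) → (∀ j, t j ≤ t' j) → φ t ≤ φ t') →
        (∫⁻ t in Set.univ.pi fun _ : Fin d => Set.Icc (0 : ℝ) 2,
            φ t / ∏ j, ENNReal.ofReal (t j ^ (1 + s j))) < ⊤ →
        ∀ μ : Measure (BndD d),
          (∀ α : VtxD d, μ (bSucc α) ≤ φ fun j => (2⁻¹ : ℝ) ^ (α j).length) →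
          ∀ ω : BndD d,
            potentialB (stdW d s) μ (bEmb ω)
              ≤ C * ∫⁻ t in Set.univ.pi fun _ : Fin d => Set.Icc (0 : ℝ) 2,
                  φ t / ∏ j, ENNReal.ofReal (t j ^ (1 + s j)) := by
  refine ⟨(8 : ℝ≥0∞) ^ d, ENNReal.pow_ne_top (by norm_num), ?_⟩
  intro φ hφ hA μ hμ ω
  clear hA
  set r : (Fin d → ℕ) → Fin d → ℝ := fun n j => (2⁻¹ : ℝ) ^ n j with hr
  have hrpos : ∀ n (j : Fin d), 0 < r n j := fun n j => pow_pos (by norm_num) _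
  have hrle1 : ∀ n (j : Fin d), r n j ≤ 1 := fun n j =>
    pow_le_one₀ (by norm_num) (by norm_num)
  set box : (Fin d → ℕ) → Set (Fin d → ℝ) :=
    fun n => Set.univ.pi fun j => Set.Ioc (r n j) (2 * r n j) with hbox
  set D : (Fin d → ℕ) → ℝ≥0∞ :=
    fun n => ∏ j, ENNReal.ofReal ((2 * r n j) ^ (1 + s j)) with hD
  set V : (Fin d → ℕ) → ℝ≥0∞ := fun n => ∏ j, ENNReal.ofReal (r n j) with hV
  have hboxmeas : ∀ n, MeasurableSet (box n) :=
    fun n => MeasurableSet.univ_pi fun j => measurableSet_Ioc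
  have hIoc : ∀ k k' : ℕ, k < k' → 2 * (2⁻¹ : ℝ) ^ k' ≤ (2⁻¹ : ℝ) ^ k := by
    intro k k' hk
    have h1 : ((2 : ℝ)⁻¹) ^ k' ≤ 2⁻¹ ^ (k + 1) :=
      pow_le_pow_of_le_one (by norm_num) (by norm_num) hk
    calc 2 * (2⁻¹ : ℝ) ^ k' ≤ 2 * 2⁻¹ ^ (k + 1) := by linarith
      _ = 2⁻¹ ^ k := by rw [pow_succ]; ring
  have hdisj : Pairwise (Function.onFun Disjoint box) := by
    intro n m hnm
    obtain ⟨j, hj⟩ : ∃ j, n j ≠ m j := by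
      by_contra h; push_neg at h; exact hnm (funext h)
    rw [Function.onFun, Set.disjoint_left]
    intro t htn htm
    have h1 := htn j (Set.mem_univ j)
    have h2 := htm j (Set.mem_univ j)
    rcases lt_or_gt_of_ne hj with h | h
    · exact absurd h1.1 (not_lt.2 (h2.2.trans (hIoc _ _ h)))
    · exact absurd h2.1 (not_lt.2 (h1.2.trans (hIoc _ _ h)))
  have hsub : (⋃ n, box n) ⊆ Set.univ.pi fun _ : Fin d => Set.Icc (0 : ℝ) 2 := by
    rintro t ht
    obtain ⟨n, hn⟩ : ∃ n, t ∈ box n := by simpa using ht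
    intro j _
    have h1 := hn j (Set.mem_univ j)
    refine ⟨le_of_lt (lt_of_le_of_lt (hrpos n j).le h1.1), ?_⟩
    calc t j ≤ 2 * r n j := h1.2
      _ ≤ 2 * 1 := by nlinarith [hrle1 n j]
      _ = 2 := by norm_num
  have hvol : ∀ n, volume (box n) = V n := by
    intro n
    rw [hbox, hV, volume_pi_pi]
    refine Finset.prod_congr rfl fun j _ => ?_
    rw [Real.volume_Ioc]
    congr 1
    ring
  have hlow : ∀ n, φ (r n) / D n * V n ≤
      ∫⁻ t in box n, φ t / ∏ j, ENNReal.ofReal (t j ^ (1 + s j)) := by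
    intro n
    rw [← hvol n, ← setLIntegral_const (box n) (φ (r n) / D n)]
    refine lintegral_mono_ae ((ae_restrict_iff' (hboxmeas n)).2 (ae_of_all _ fun t ht => ?_))
    have htj : ∀ j, t j ∈ Set.Ioc (r n j) (2 * r n j) := fun j => ht j (Set.mem_univ j)
    have ht0 : ∀ j, 0 ≤ t j := fun j => le_of_lt (lt_of_le_of_lt (hrpos n j).le (htj j).1)
    refine ENNReal.div_le_div (hφ (r n) t ?_ ?_ fun j => (htj j).1.le) ?_
    · intro j; exact ⟨(hrpos n j).le, (hrle1 n j).trans one_le_two⟩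
    · intro j; exact ⟨ht0 j, by nlinarith [(htj j).2, hrle1 n j]⟩
    · refine Finset.prod_le_prod' fun j _ => ENNReal.ofReal_le_ofReal ?_
      exact Real.rpow_le_rpow (ht0 j) (htj j).2 (by linarith [hs0 j])
  have hdecomp : (∑' n : Fin d → ℕ,
        ∫⁻ t in box n, φ t / ∏ j, ENNReal.ofReal (t j ^ (1 + s j))) ≤
      ∫⁻ t in Set.univ.pi fun _ : Fin d => Set.Icc (0 : ℝ) 2,
        φ t / ∏ j, ENNReal.ofReal (t j ^ (1 + s j)) := by
    rw [← lintegral_sum_measure, ← Measure.restrict_iUnion hdisj hboxmeas]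
    exact lintegral_mono' (Measure.restrict_mono hsub le_rfl) le_rfl
  have hterm : ∀ n : Fin d → ℕ, μ (bSucc (seg ω n)) * stdW d s (seg ω n) ≤
      (8 : ℝ≥0∞) ^ d * (φ (r n) / D n * V n) := by
    intro n
    have h1 : μ (bSucc (seg ω n)) ≤ φ (r n) := by
      have h := hμ (seg ω n)
      have he : (fun j => ((2 : ℝ)⁻¹) ^ (seg ω n j).length) = r n := by
        funext j; rw [seg_len]
      rwa [he] at h
    have hstd : stdW d s (seg ω n) = (2 : ℝ≥0∞) ^ (∑ j, s j * ((n j : ℝ) + 1)) := by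
      rw [← two_rpow_sum]
      refine Finset.prod_congr rfl fun j _ => ?_
      have hd : dT (seg ω n j) = n j + 1 := by rw [dT, seg_len]
      rw [hd]
      push_cast
      ring_nf
    have hVeq : V n = (2 : ℝ≥0∞) ^ (∑ j, -(n j : ℝ)) := by
      rw [hV, ← two_rpow_sum]
      refine Finset.prod_congr rfl fun j _ => ?_
      show ENNReal.ofReal ((2⁻¹ : ℝ) ^ n j) = _
      rw [inv_pow_eq_rpow, ofReal_two_rpow]
    have hDeq : D n = (2 : ℝ≥0∞) ^ (∑ j, (1 - (n j : ℝ)) * (1 + s j)) := by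
      rw [hD, ← two_rpow_sum]
      refine Finset.prod_congr rfl fun j _ => ?_
      have h2r : 2 * r n j = (2 : ℝ) ^ (1 - (n j : ℝ)) := by
        show 2 * (2⁻¹ : ℝ) ^ n j = _
        rw [inv_pow_eq_rpow, sub_eq_add_neg,
          Real.rpow_add (by norm_num : (0 : ℝ) < 2), Real.rpow_one]
      rw [h2r, ← Real.rpow_mul (by norm_num : (0 : ℝ) ≤ 2), ofReal_two_rpow]
    have hW : stdW d s (seg ω n) ≤ (8 : ℝ≥0∞) ^ d * (V n * (D n)⁻¹) := by
      rw [hstd, hVeq, hDeq, ← ENNReal.rpow_neg,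
        ← ENNReal.rpow_add _ _ two_ne_zero ENNReal.ofNat_ne_top]
      have h8 : (8 : ℝ≥0∞) ^ d = (2 : ℝ≥0∞) ^ ((3 * d : ℕ) : ℝ) := by
        rw [ENNReal.rpow_natCast, pow_mul]; norm_num
      rw [h8, ← ENNReal.rpow_add _ _ two_ne_zero ENNReal.ofNat_ne_top]
      refine ENNReal.rpow_le_rpow_of_exponent_le one_le_two ?_
      have hd3 : ((3 * d : ℕ) : ℝ) = ∑ _j : Fin d, (3 : ℝ) := by
        simp [Finset.sum_const, Finset.card_univ]
        ring
      rw [hd3, neg_eq_neg_one_mul, Finset.mul_sum, ← Finset.sum_add_distrib,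
        ← Finset.sum_add_distrib]
      refine Finset.sum_le_sum fun j _ => ?_
      nlinarith [hs0 j, hs1 j, (Nat.cast_nonneg (n j) : (0 : ℝ) ≤ (n j : ℝ))]
    calc μ (bSucc (seg ω n)) * stdW d s (seg ω n)
        ≤ φ (r n) * ((8 : ℝ≥0∞) ^ d * (V n * (D n)⁻¹)) := mul_le_mul' h1 hW
      _ = (8 : ℝ≥0∞) ^ d * (φ (r n) / D n * V n) := by
          rw [div_eq_mul_inv]; ring
  rw [potB_eq]
  calc (∑' n : Fin d → ℕ, μ (bSucc (seg ω n)) * stdW d s (seg ω n))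
      ≤ ∑' n : Fin d → ℕ, (8 : ℝ≥0∞) ^ d * (φ (r n) / D n * V n) :=
        ENNReal.tsum_le_tsum hterm
    _ = (8 : ℝ≥0∞) ^ d * ∑' n : Fin d → ℕ, (φ (r n) / D n * V n) :=
        ENNReal.tsum_mul_left
    _ ≤ (8 : ℝ≥0∞) ^ d * ∑' n : Fin d → ℕ,
          ∫⁻ t in box n, φ t / ∏ j, ENNReal.ofReal (t j ^ (1 + s j)) :=
        mul_le_mul_right (ENNReal.tsum_le_tsum hlow) _
    _ ≤ _ := mul_le_mul_right hdecomp _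
end
end

section
/- Let π be a weight on T^d and let μ be a nonnegative Borel measure on (∂T)^d whose potential is uniformly bounded: V_π^μ(ω) ≤ C for every ω ∈ (∂T)^d. Then the dual trace inequality holds with the same constant: ∑_{α ∈ T^d} (∫_{∂S(α)} g dμ)² π(α) ≤ C ∫_{(∂T)^d} g² dμ for every Borel g ≥ 0 on (∂T)^d. -/
open MeasureTheory ENNReal Set
open scoped Classical

noncomputable section

lemma meas_bSucc {d : ℕ} (α : VtxD d) : MeasurableSet (bSucc α) := by
  have h : bSucc α =
      ⋂ i : Fin d, ⋂ j : Fin (α i).length, {ω : BndD d | (α i).get j = ω i j} := by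
    ext ω
    simp only [bSucc, vleOf, bEmb, ancOf, Set.mem_setOf_eq, Set.mem_iInter]
  rw [h]
  refine MeasurableSet.iInter fun i => MeasurableSet.iInter fun j => ?_
  have hm : Measurable fun ω : BndD d => ω i (j : ℕ) :=
    (measurable_pi_apply (j : ℕ)).comp (measurable_pi_apply i)
  have : {ω : BndD d | (α i).get j = ω i j} = (fun ω : BndD d => ω i (j : ℕ)) ⁻¹' {(α i).get j} := by
    ext ω; simp [eq_comm]
  rw [this]
  exact hm (measurableSet_singleton _)

lemma cs_sq {Ω : Type*} [MeasurableSpace Ω] (μ : Measure Ω) (s : Set Ω)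
    (g : Ω → ℝ≥0∞) (hg : Measurable g) :
    (∫⁻ ω in s, g ω ∂μ) ^ 2 ≤ μ s * ∫⁻ ω in s, g ω ^ 2 ∂μ := by
  have hpq : (2 : ℝ).HolderConjugate 2 := by
    constructor <;> norm_num
  have h := ENNReal.lintegral_mul_le_Lp_mul_Lq (μ.restrict s) hpq
    hg.aemeasurable (aemeasurable_const (b := (1 : ℝ≥0∞)))
  simp only [Pi.mul_apply, mul_one, ENNReal.one_rpow, lintegral_const,
    Measure.restrict_apply_univ, one_mul] at h
  have h2 : (∫⁻ ω in s, g ω ∂μ) ^ 2 ≤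
      ((∫⁻ a in s, g a ^ (2:ℝ) ∂μ) ^ (1 / (2:ℝ)) * μ s ^ (1 / (2:ℝ))) ^ 2 :=
    pow_le_pow_left₀ (zero_le) h 2
  calc (∫⁻ ω in s, g ω ∂μ) ^ 2
      ≤ ((∫⁻ a in s, g a ^ (2:ℝ) ∂μ) ^ (1 / (2:ℝ))) ^ 2 * (μ s ^ (1 / (2:ℝ))) ^ 2 := by
        rw [← mul_pow]; exact h2
    _ = (∫⁻ a in s, g a ^ (2:ℝ) ∂μ) * μ s := by
        rw [← ENNReal.rpow_natCast _ 2, ← ENNReal.rpow_natCast _ 2,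
          ← ENNReal.rpow_mul, ← ENNReal.rpow_mul]
        norm_num
    _ = μ s * ∫⁻ ω in s, g ω ^ 2 ∂μ := by
        rw [mul_comm]
        congr 1
        refine lintegral_congr fun a => ?_
        rw [← ENNReal.rpow_natCast (g a) 2]
        norm_num

/-- a uniform bound `V_π^μ ≤ C` on the distinguished boundary implies the dual
trace inequality with the same constant `C`. -/
theorem statement16 (d : ℕ) (π : VtxD d → ℝ≥0∞) (hπ : ∀ β, 0 < π β ∧ π β ≠ ⊤)
    (μ : Measure (BndD d)) (C : ℝ≥0∞)
    (hV : ∀ ω : BndD d, potentialB π μ (bEmb ω) ≤ C) :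
    ∀ g : BndD d → ℝ≥0∞, Measurable g →
      (∑' α : VtxD d, (∫⁻ ω in bSucc α, g ω ∂μ) ^ 2 * π α) ≤ C * ∫⁻ ω, g ω ^ 2 ∂μ := by
  intro g hg
  have hGm : Measurable fun ω => g ω ^ 2 := hg.pow_const 2
  set F : VtxD d → BndD d → ℝ≥0∞ :=
    fun α => Set.indicator (bSucc α) (fun ω => μ (bSucc α) * π α * g ω ^ 2) with hF
  have hFm : ∀ α, Measurable (F α) := fun α =>
    (measurable_const.mul hGm).indicator (meas_bSucc α)
  have hstep1 : ∀ α : VtxD d, (∫⁻ ω in bSucc α, g ω ∂μ) ^ 2 * π α ≤ ∫⁻ ω, F α ω ∂μ := by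
    intro α
    have hI : ∫⁻ ω, F α ω ∂μ = μ (bSucc α) * π α * ∫⁻ ω in bSucc α, g ω ^ 2 ∂μ := by
      simp only [hF]
      rw [lintegral_indicator (meas_bSucc α), lintegral_const_mul _ hGm]
    rw [hI]
    calc (∫⁻ ω in bSucc α, g ω ∂μ) ^ 2 * π α
        ≤ (μ (bSucc α) * ∫⁻ ω in bSucc α, g ω ^ 2 ∂μ) * π α :=
          mul_le_mul_left (cs_sq μ (bSucc α) g hg) _
      _ = μ (bSucc α) * π α * ∫⁻ ω in bSucc α, g ω ^ 2 ∂μ := by ring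
  have hpt : ∀ ω, (∑' α, F α ω) = potentialB π μ (bEmb ω) * g ω ^ 2 := by
    intro ω
    have hterm : ∀ α, F α ω =
        Set.indicator {β : VtxD d | vleOf (bEmb ω) β} (fun β => μ (bSucc β) * π β) α * g ω ^ 2 := by
      intro α
      by_cases h : vleOf (bEmb ω) α
      · have hω : ω ∈ bSucc α := h
        have hα : α ∈ {β : VtxD d | vleOf (bEmb ω) β} := h
        simp only [hF]
        rw [Set.indicator_of_mem hω, Set.indicator_of_mem hα]
      · have hω : ω ∉ bSucc α := h
        have hα : α ∉ {β : VtxD d | vleOf (bEmb ω) β} := h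
        simp only [hF]
        rw [Set.indicator_of_notMem hω, Set.indicator_of_notMem hα, zero_mul]
    rw [tsum_congr hterm, ENNReal.tsum_mul_right, potentialB]
  calc ∑' α : VtxD d, (∫⁻ ω in bSucc α, g ω ∂μ) ^ 2 * π α
      ≤ ∑' α, ∫⁻ ω, F α ω ∂μ := ENNReal.tsum_le_tsum hstep1
    _ = ∫⁻ ω, ∑' α, F α ω ∂μ := (lintegral_tsum fun α => (hFm α).aemeasurable).symm
    _ ≤ ∫⁻ ω, C * g ω ^ 2 ∂μ := by
        refine lintegral_mono fun ω => ?_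
        rw [hpt ω]
        exact mul_le_mul_left (hV ω) _
    _ = C * ∫⁻ ω, g ω ^ 2 ∂μ := lintegral_const_mul C hGm
end
end
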